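/- Suppose Φ solves the KW-AIG Hamilton–Jacobi equation and X : ℝ → ℝⁿ is differentiable with X'(t) = C(t) ∇_xΦ(t, X(t)). Then V(t) := ∇_xΦ(t, X(t)) is differentiable and V'(t) = −α(t) V(t) − B(t)(X(t) − m(t)) − ∇_xΨ(t, X(t)). That is, a particle following the Kalman–Wasserstein flow satisfies dX/dt = C(t)V, dV/dt = −α_t V − B(t)(X − m(t)) − ∇(δE/δρ_t)(X). -/

import Mathlib

/-!
Along the curve `s ↦ (s, X s)` the chain rule gives `V' = ∂ₜ∇ₓΦ + ∇ₓ²Φ (C V)`. Differentiating the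
Hamilton–Jacobi equation in `x` in a direction `w`, and using the symmetry of `B`, `C` and of the
second derivative of `Φ` (which lets `∂ₜ∇ₓΦ` be read off from `∇ₓ∂ₜΦ`), gives
`⟪∂ₜ∇ₓΦ, w⟫ = -α⟪V, w⟫ - ⟪B (X - m), w⟫ - ⟪C V, ∇ₓ²Φ w⟫ - ⟪∇ₓΨ, w⟫`;
the Hessian term cancels the one coming from the chain rule.
-/
open scoped RealInnerProductSpace
open Function InnerProductSpace ContinuousLinearMap

variable {E : Type*} [NormedAddCommGroup E] [InnerProductSpace ℝ E] {Φ : ℝ → E → ℝ}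

theorem deriv_eq_fderiv_uncurry_apply {t : ℝ} {x : E}
    (h : DifferentiableAt ℝ (uncurry Φ) (t, x)) :
    deriv (fun s => Φ s x) t = fderiv ℝ (uncurry Φ) (t, x) (1, 0) := by
  have hslice : HasFDerivAt (fun s : ℝ => (s, x)) (inl ℝ ℝ E) t := hasFDerivAt_prodMk_left t x
  exact (h.hasFDerivAt.comp t hslice).hasDerivAt.deriv

theorem hasFDerivAt_deriv_uncurry (hΦ : ContDiff ℝ 2 (uncurry Φ)) (q : ℝ × E) :
    HasFDerivAt (fun q : ℝ × E => deriv (fun s => Φ s q.2) q.1)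
      (apply ℝ ℝ ((1 : ℝ), (0 : E)) ∘L fderiv ℝ (fderiv ℝ (uncurry Φ)) q) q := by
  have hD : Differentiable ℝ (fderiv ℝ (uncurry Φ)) :=
    (hΦ.fderiv_right (m := 1) (by norm_num)).differentiable one_ne_zero
  refine ((apply ℝ ℝ ((1 : ℝ), (0 : E))).hasFDerivAt.comp q
    (hD q).hasFDerivAt).congr_of_eventuallyEq (.of_forall fun p => ?_)
  exact deriv_eq_fderiv_uncurry_apply ((hΦ.differentiable (by norm_num)) p)

variable [CompleteSpace E] {G : Type*} [NormedAddCommGroup G] [NormedSpace ℝ G]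

noncomputable def gradientAlong (j : E →L[ℝ] G) : (G →L[ℝ] ℝ) →L[ℝ] E :=
  (toDual ℝ E).symm.toContinuousLinearEquiv.toContinuousLinearMap ∘L (compL ℝ E G ℝ).flip j

@[simp]
theorem inner_gradientAlong (j : E →L[ℝ] G) (ℓ : G →L[ℝ] ℝ) (v : E) :
    ⟪gradientAlong j ℓ, v⟫ = ℓ (j v) := by
  simp [gradientAlong, toDual_symm_apply]

theorem HasFDerivAt.gradient_eq_gradientAlong {g : E → ℝ} {j : E →L[ℝ] G} {ℓ : G →L[ℝ] ℝ} {x : E}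
    (h : HasFDerivAt g (ℓ.comp j) x) : gradient g x = gradientAlong j ℓ :=
  ext_inner_right ℝ fun v => by rw [inner_gradient_left, h.fderiv, inner_gradientAlong]; rfl

theorem gradient_eq_gradientAlong_fderiv_uncurry {t : ℝ} {x : E}
    (h : DifferentiableAt ℝ (uncurry Φ) (t, x)) :
    gradient (Φ t) x = gradientAlong (inr ℝ ℝ E) (fderiv ℝ (uncurry Φ) (t, x)) :=
  (h.hasFDerivAt.comp x (hasFDerivAt_prodMk_right t x)).gradient_eq_gradientAlong

theorem hasFDerivAt_gradient_uncurry (hΦ : ContDiff ℝ 2 (uncurry Φ)) (q : ℝ × E) :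
    HasFDerivAt (fun q : ℝ × E => gradient (Φ q.1) q.2)
      (gradientAlong (inr ℝ ℝ E) ∘L fderiv ℝ (fderiv ℝ (uncurry Φ)) q) q := by
  have hD : Differentiable ℝ (fderiv ℝ (uncurry Φ)) :=
    (hΦ.fderiv_right (m := 1) (by norm_num)).differentiable one_ne_zero
  refine ((gradientAlong _).hasFDerivAt.comp q (hD q).hasFDerivAt).congr_of_eventuallyEq
    (.of_forall fun p => ?_)
  exact gradient_eq_gradientAlong_fderiv_uncurry ((hΦ.differentiable (by norm_num)) p)

theorem hamiltonJacobi_spatialDeriv_eq_zero (hΦ : ContDiff ℝ 2 (uncurry Φ)) {t a : ℝ} {m : E}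
    {B C : E →L[ℝ] E} {ψ : E → ℝ}
    (hB : ∀ v w, ⟪B v, w⟫ = ⟪v, B w⟫) (hC : ∀ v w, ⟪C v, w⟫ = ⟪v, C w⟫)
    (hψ : Differentiable ℝ ψ)
    (hHJ : ∀ x, deriv (fun s => Φ s x) t + a * Φ t x
      + (1/2) * (⟪x - m, B (x - m)⟫ + ⟪gradient (Φ t) x, C (gradient (Φ t) x)⟫) + ψ x = 0)
    (x w : E) :
    fderiv ℝ (fderiv ℝ (uncurry Φ)) (t, x) (0, w) (1, 0) + a * ⟪gradient (Φ t) x, w⟫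
      + ⟪B (x - m), w⟫
      + ⟪C (gradient (Φ t) x),
          gradientAlong (inr ℝ ℝ E) (fderiv ℝ (fderiv ℝ (uncurry Φ)) (t, x) (0, w))⟫
      + ⟪gradient ψ x, w⟫ = 0 := by
  have hslice : HasFDerivAt (fun y : E => (t, y)) (inr ℝ ℝ E) x := hasFDerivAt_prodMk_right t x
  have hT := (hasFDerivAt_deriv_uncurry hΦ (t, x)).comp x hslice
  have hΦt := ((hΦ.differentiable (by norm_num)) (t, x)).hasFDerivAt.comp x hslice
  have hG := (hasFDerivAt_gradient_uncurry hΦ (t, x)).comp x hslice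
  have hxm := (hasFDerivAt_id (𝕜 := ℝ) x).sub_const m
  have hresidual := (((hT.add (hΦt.const_mul a)).add
    (((hxm.inner ℝ (B.hasFDerivAt.comp x hxm)).add
      (hG.inner ℝ (C.hasFDerivAt.comp x hG))).const_mul (1/2))).add (hψ x).hasFDerivAt)
  have hR0 := congrArg (· w) ((hasFDerivAt_const (0 : ℝ) x).unique
    (hresidual.congr_of_eventuallyEq (.of_forall fun y => (hHJ y).symm)))
  simp only [zero_apply, add_apply, ContinuousLinearMap.comp_apply, inr_apply, apply_apply,
    smul_apply, smul_eq_mul, ContinuousLinearMap.prod_apply, ContinuousLinearMap.comp_id,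
    ContinuousLinearMap.id_apply, fderivInnerCLM_apply, Function.comp_apply, id_eq] at hR0
  have hgrad : ⟪gradient (Φ t) x, w⟫ = fderiv ℝ (uncurry Φ) (t, x) (0, w) := by
    rw [gradient_eq_gradientAlong_fderiv_uncurry ((hΦ.differentiable (by norm_num)) (t, x)),
      inner_gradientAlong, inr_apply]
  rw [← inner_gradient_left] at hR0
  set g := gradient (Φ t) x
  set Hw := gradientAlong (inr ℝ ℝ E) (fderiv ℝ (fderiv ℝ (uncurry Φ)) (t, x) (0, w))
  have hBw : ⟪x - m, B w⟫ = ⟪B (x - m), w⟫ := (hB _ _).symm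
  have hCg : ⟪g, C Hw⟫ = ⟪C g, Hw⟫ := (hC _ _).symm
  rw [← hgrad, hBw, hCg] at hR0
  linarith [real_inner_comm w (B (x - m)), real_inner_comm Hw (C g)]

/-- Particle formulation of the KW-AIG flow: if `Φ` solves the Kalman–Wasserstein
Hamilton–Jacobi equation and `X' = C(t)∇ₓΦ(t, X)`, then `V := ∇ₓΦ(t, X)` satisfies
`V' = −αV − B(t)(X − m(t)) − ∇ₓΨ(t, X)`. -/
theorem particle_KW_AIG_flow
    {n : ℕ} (Φ Ψ : ℝ → EuclideanSpace ℝ (Fin n) → ℝ) (α : ℝ → ℝ)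
    (m : ℝ → EuclideanSpace ℝ (Fin n))
    (C B : ℝ → EuclideanSpace ℝ (Fin n) →L[ℝ] EuclideanSpace ℝ (Fin n))
    (hCsymm : ∀ t v w, ⟪C t v, w⟫ = ⟪v, C t w⟫)
    (hBsymm : ∀ t v w, ⟪B t v, w⟫ = ⟪v, B t w⟫)
    (hΦ : ContDiff ℝ 2 (fun p : ℝ × EuclideanSpace ℝ (Fin n) => Φ p.1 p.2))
    (hΨ : ∀ t, Differentiable ℝ (Ψ t))
    (hHJ : ∀ t x, deriv (fun s => Φ s x) t + α t * Φ t x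
      + (1/2) * (⟪x - m t, B t (x - m t)⟫ + ⟪gradient (Φ t) x, C t (gradient (Φ t) x)⟫)
      + Ψ t x = 0)
    (X : ℝ → EuclideanSpace ℝ (Fin n))
    (hX : ∀ t, HasDerivAt X (C t (gradient (Φ t) (X t))) t)
    (V : ℝ → EuclideanSpace ℝ (Fin n))
    (hV : ∀ t, V t = gradient (Φ t) (X t)) :
    ∀ t, HasDerivAt V (-(α t) • V t - B t (X t - m t) - gradient (Ψ t) (X t)) t := by
  intro t
  set D2 := fderiv ℝ (fderiv ℝ (uncurry Φ)) (t, X t)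
  have hcurve : HasDerivAt (fun s => (s, X s)) (1, C t (V t)) t :=
    (hasDerivAt_id t).prodMk (hV t ▸ hX t)
  have hVderiv : HasDerivAt V (gradientAlong (inr ℝ ℝ _) (D2 (1, C t (V t)))) t :=
    ((hasFDerivAt_gradient_uncurry hΦ (t, X t)).comp_hasDerivAt t hcurve).congr_of_eventuallyEq
      (.of_forall hV)
  suffices hV' : gradientAlong (inr ℝ ℝ _) (D2 (1, C t (V t)))
      = -(α t) • V t - B t (X t - m t) - gradient (Ψ t) (X t) from hV' ▸ hVderiv
  refine ext_inner_right ℝ fun w => ?_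
  have hsymm : D2 (1, C t (V t)) (0, w) = D2 (0, w) (1, C t (V t)) :=
    hΦ.contDiffAt.isSymmSndFDerivAt (by simp) _ _
  have hsplit : ((1 : ℝ), C t (V t)) = (1, 0) + (0, C t (V t)) := by simp
  have hdiff := hamiltonJacobi_spatialDeriv_eq_zero hΦ (hBsymm t) (hCsymm t) (hΨ t) (hHJ t) (X t) w
  rw [← hV] at hdiff
  calc ⟪gradientAlong (inr ℝ ℝ _) (D2 (1, C t (V t))), w⟫
      = D2 (0, w) (1, 0) + D2 (0, w) (0, C t (V t)) := by
        rw [inner_gradientAlong, inr_apply, hsymm, hsplit, map_add]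
    _ = D2 (0, w) (1, 0) + ⟪C t (V t), gradientAlong (inr ℝ ℝ _) (D2 (0, w))⟫ := by
        rw [real_inner_comm, inner_gradientAlong, inr_apply]
    _ = ⟪-(α t) • V t - B t (X t - m t) - gradient (Ψ t) (X t), w⟫ := by
        rw [inner_sub_left, inner_sub_left, real_inner_smul_left]
        linarith
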